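/- Suppose (p_j)_{j=1}^{m} are reals in [0, 1/2] with sum_{j=1}^m p_j <= k, and Y_1 >= Y_2 >= ... >= Y_m >= 0. Then sum_{j=1}^m p_j * Y_j <= (1/2) * sum_{j=1}^{min(2k, m)} Y_j. -/

import Mathlib

/-! Exchange argument. Put `t = min (2k) m` and take the threshold `c = Y_t` (or `c = 0` if
`t = m`). Indices `j < t` have `Y_j ≥ c` and spare capacity `1/2 - p_j`, whose total
`t/2 - ∑_{j<t} p_j` is at least the mass `∑_{j≥t} p_j` on indices with `Y_j ≤ c`. Moving that
mass into the spare capacity therefore gains at least `c` per unit, and filling every capacity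
gives the right-hand side. -/

open Finset

theorem sum_mul_le_mul_sum_of_threshold {ι : Type*} [Fintype ι] [DecidableEq ι] (s : Finset ι)
    (a c : ℝ) (p Y : ι → ℝ) (hc : 0 ≤ c) (hp0 : ∀ j, 0 ≤ p j) (hpa : ∀ j ∈ s, p j ≤ a)
    (hsum : ∑ j, p j ≤ a * #s) (hYs : ∀ j ∈ s, c ≤ Y j) (hYsc : ∀ j ∉ s, Y j ≤ c) :
    ∑ j, p j * Y j ≤ a * ∑ j ∈ s, Y j := by
  have hsplit (f : ι → ℝ) : ∑ j, f j = ∑ j ∈ s, f j + ∑ j ∈ sᶜ, f j :=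
    (sum_add_sum_compl s f).symm
  have hin : c * (a * #s - ∑ j ∈ s, p j) ≤ ∑ j ∈ s, (a - p j) * Y j := by
    calc c * (a * #s - ∑ j ∈ s, p j) = ∑ j ∈ s, (a - p j) * c := by
          rw [← sum_mul, sum_sub_distrib, sum_const, nsmul_eq_mul]; ring
      _ ≤ ∑ j ∈ s, (a - p j) * Y j :=
          sum_le_sum fun j hj => mul_le_mul_of_nonneg_left (hYs j hj) (sub_nonneg.2 (hpa j hj))
  have hout : ∑ j ∈ sᶜ, p j * Y j ≤ c * ∑ j ∈ sᶜ, p j := by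
    rw [mul_sum]
    exact sum_le_sum fun j hj =>
      (mul_le_mul_of_nonneg_left (hYsc j (mem_compl.1 hj)) (hp0 j)).trans_eq (mul_comm _ _)
  have hmass : c * ∑ j, p j ≤ c * (a * #s) := mul_le_mul_of_nonneg_left hsum hc
  rw [hsplit p] at hmass
  rw [hsplit, mul_sum]
  simp only [sub_mul, sum_sub_distrib] at hin
  linarith

theorem sum_mul_le_mul_sum_filter_lt_of_antitone {m : ℕ} (t : ℕ) (ht : t ≤ m) (a : ℝ)
    (p Y : Fin m → ℝ) (hp0 : ∀ j, 0 ≤ p j) (hpa : ∀ j, p j ≤ a) (hsum : ∑ j, p j ≤ a * t)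
    (hY : Antitone Y) (hY0 : ∀ j, 0 ≤ Y j) :
    ∑ j, p j * Y j ≤ a * ∑ j ∈ univ.filter (fun j : Fin m => (j : ℕ) < t), Y j := by
  have hcard : #(univ.filter fun j : Fin m => (j : ℕ) < t) = t := by
    rw [Fin.card_filter_val_lt, min_eq_right ht]
  rw [← hcard] at hsum
  rcases ht.lt_or_eq with ht | rfl
  · refine sum_mul_le_mul_sum_of_threshold _ a (Y ⟨t, ht⟩) p Y (hY0 _) hp0 (fun j _ => hpa j)
      hsum (fun j hj => hY ?_) (fun j hj => hY ?_)
    · simpa [Fin.le_def] using (mem_filter.1 hj).2.le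
    · simpa [Fin.le_def] using hj
  · exact sum_mul_le_mul_sum_of_threshold _ a 0 p Y le_rfl hp0 (fun j _ => hpa j) hsum
      (fun j _ => hY0 j) (fun j hj => absurd (by simp) hj)

theorem stmt2_general (m k : ℕ) (p Y : Fin m → ℝ)
    (hp0 : ∀ j, 0 ≤ p j) (hp : ∀ j, p j ≤ 1/2)
    (hsum : ∑ j, p j ≤ (k : ℝ))
    (hY : Antitone Y) (hY0 : ∀ j, 0 ≤ Y j) :
    ∑ j, p j * Y j ≤
      (1/2) * ∑ j ∈ Finset.univ.filter (fun j : Fin m => (j : ℕ) < min (2*k) m), Y j := by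
  have hsum_half : ∑ j, p j ≤ 1/2 * m := by
    simpa [mul_comm] using sum_le_card_nsmul univ p (1/2) fun j _ => hp j
  refine sum_mul_le_mul_sum_filter_lt_of_antitone _ (min_le_right _ _) _ p Y hp0 hp ?_ hY hY0
  push_cast
  rw [mul_min_of_nonneg _ _ (by norm_num : (0 : ℝ) ≤ 1/2)]
  exact le_min (by linarith) hsum_half

/-- If the weights `p j ∈ [0, 1/2]` sum to at most `k` and
`Y_0 ≥ Y_1 ≥ ... ≥ 0`, then `∑ p j * Y j ≤ (1/2) * ∑_{j < min (2k) m} Y j`. -/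
theorem stmt2 (m k : ℕ) (hk : 0 < k) (p Y : Fin m → ℝ)
    (hp0 : ∀ j, 0 ≤ p j) (hp : ∀ j, p j ≤ 1/2)
    (hsum : ∑ j, p j ≤ (k : ℝ))
    (hY : Antitone Y) (hY0 : ∀ j, 0 ≤ Y j) :
    ∑ j, p j * Y j ≤
      (1/2) * ∑ j ∈ Finset.univ.filter (fun j : Fin m => (j : ℕ) < min (2*k) m), Y j :=
  stmt2_general m k p Y hp0 hp hsum hY hY0
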